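/- arXiv:1802.01547 — 2 statements merged into one kernel-verified Lean document; each statement's English description precedes it below -/
import Mathlib

section
/- The quadratic form q_k is closed: if (φ_n) is a sequence in D(q_k) and φ ∈ L²(μ_k) satisfy ‖φ_n - φ‖_{L²(μ_k)} → 0 and q_k(φ_n - φ_m) → 0 as n, m → ∞, then φ ∈ D(q_k) and q_k(φ_n - φ) → 0 as n → ∞. -/
open MeasureTheory Filter Metric
open scoped Topology ENNReal InnerProductSpace ComplexConjugate

noncomputable section

/-- The orthogonal reflection in the hyperplane perpendicular to `α`. -/
def dunklReflect {d : ℕ} (α x : EuclideanSpace ℝ (Fin d)) : EuclideanSpace ℝ (Fin d) :=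
  x - (2 * (inner ℝ α x : ℝ) / (inner ℝ α α : ℝ)) • α

/-- The Dunkl operator `T_ξ` associated with the positive subsystem `Rp` and
multiplicity function `k`, acting on complex-valued functions. -/
def dunklOp {d : ℕ} (Rp : Finset (EuclideanSpace ℝ (Fin d)))
    (k : EuclideanSpace ℝ (Fin d) → ℝ) (ξ : EuclideanSpace ℝ (Fin d))
    (f : EuclideanSpace ℝ (Fin d) → ℂ) (x : EuclideanSpace ℝ (Fin d)) : ℂ :=
  fderiv ℝ f x ξ +
    ∑ α ∈ Rp, ((k α * (inner ℝ α ξ : ℝ) : ℝ) : ℂ) * (f x - f (dunklReflect α x)) /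
      (((inner ℝ α x : ℝ) : ℝ) : ℂ)

/-- The Dunkl Laplacian `Δ_k = Σ_j T_j²`. -/
def dunklLap {d : ℕ} (Rp : Finset (EuclideanSpace ℝ (Fin d)))
    (k : EuclideanSpace ℝ (Fin d) → ℝ)
    (f : EuclideanSpace ℝ (Fin d) → ℂ) (x : EuclideanSpace ℝ (Fin d)) : ℂ :=
  ∑ j : Fin d, dunklOp Rp k (EuclideanSpace.single j 1)
    (dunklOp Rp k (EuclideanSpace.single j 1) f) x

/-- The Dunkl weight `w_k(x) = ∏_{α ∈ R⁺} |⟨α,x⟩|^{2k(α)}`. -/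
def dunklWeight {d : ℕ} (Rp : Finset (EuclideanSpace ℝ (Fin d)))
    (k : EuclideanSpace ℝ (Fin d) → ℝ) (x : EuclideanSpace ℝ (Fin d)) : ℝ :=
  ∏ α ∈ Rp, |(inner ℝ α x : ℝ)| ^ (2 * k α)

/-- The measure `μ_k = w_k(x) dx`. -/
def dunklMeasure {d : ℕ} (Rp : Finset (EuclideanSpace ℝ (Fin d)))
    (k : EuclideanSpace ℝ (Fin d) → ℝ) : Measure (EuclideanSpace ℝ (Fin d)) :=
  volume.withDensity fun x => ENNReal.ofReal (dunklWeight Rp k x)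

/-- The hypotheses that `R` is a reduced root system in `ℝ^d`, `k` is a `G`-invariant
multiplicity function (`G`-invariance is equivalent to invariance under each of the
generating reflections `σ_α`, `α ∈ R`), and `Rp` is a positive subsystem of `R`. -/
def IsRootSystemData {d : ℕ} (R Rp : Finset (EuclideanSpace ℝ (Fin d)))
    (k : EuclideanSpace ℝ (Fin d) → ℝ) : Prop :=
  (0 : EuclideanSpace ℝ (Fin d)) ∉ R ∧
  (∀ α ∈ R, -α ∈ R) ∧
  (∀ α ∈ R, ∀ c : ℝ, c • α ∈ R → c • α = α ∨ c • α = -α) ∧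
  (∀ α ∈ R, ∀ β ∈ R, dunklReflect α β ∈ R) ∧
  (∀ α ∈ R, 0 ≤ k α) ∧
  (∀ α ∈ R, ∀ β ∈ R, k (dunklReflect α β) = k β) ∧
  (∀ α, α ∈ R ↔ (α ∈ Rp ∨ -α ∈ Rp)) ∧
  (∀ α ∈ Rp, -α ∉ Rp)

private lemma sq_tendsto_zero {ι : Type*} {l : Filter ι} {f : ι → ℝ≥0∞}
    (h : Tendsto f l (𝓝 0)) : Tendsto (fun i => f i ^ 2) l (𝓝 0) := by
  have h2 := (ENNReal.continuous_rpow_const (y := (2:ℝ))).tendsto 0 |>.comp h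
  have h0 : ((0:ℝ≥0∞) ^ (2:ℝ)) = 0 := by
    rw [ENNReal.zero_rpow_of_pos]; norm_num
  rw [h0] at h2
  refine h2.congr fun i => ?_
  simp only [Function.comp_apply]
  rw [← ENNReal.rpow_natCast (f i) 2]
  norm_num

private lemma tendsto_zero_of_sq_le {ι : Type*} {l : Filter ι} {f u : ι → ℝ≥0∞}
    (h : Tendsto u l (𝓝 0)) (hle : ∀ i, f i ^ 2 ≤ u i) : Tendsto f l (𝓝 0) := by
  have h2 : Tendsto (fun i => f i ^ 2) l (𝓝 0) :=
    tendsto_of_tendsto_of_tendsto_of_le_of_le tendsto_const_nhds h (fun i => zero_le) hle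
  have h3 := (ENNReal.continuous_rpow_const (y := (2:ℝ)⁻¹)).tendsto 0 |>.comp h2
  have h0 : ((0:ℝ≥0∞) ^ ((2:ℝ)⁻¹)) = 0 := by
    rw [ENNReal.zero_rpow_of_pos]; norm_num
  rw [h0] at h3
  refine h3.congr fun i => ?_
  simp only [Function.comp_apply]
  rw [← ENNReal.rpow_natCast (f i) 2, ← ENNReal.rpow_mul]
  norm_num

private lemma lp_limit_of_cauchy {α : Type*} {m : MeasurableSpace α} {μ : Measure α}
    {F : ℕ → α → ℂ} (hF : ∀ n, MemLp (F n) 2 μ)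
    (h : Tendsto (fun p : ℕ × ℕ => eLpNorm (fun x => F p.1 x - F p.2 x) 2 μ) atTop (𝓝 0)) :
    ∃ G : α → ℂ, MemLp G 2 μ ∧
      Tendsto (fun n => eLpNorm (fun x => F n x - G x) 2 μ) atTop (𝓝 0) := by
  have hc : CauchySeq (fun n => (hF n).toLp (F n)) := by
    rw [Metric.cauchySeq_iff]
    intro ε hε
    have hev : ∀ᶠ p : ℕ × ℕ in atTop,
        eLpNorm (fun x => F p.1 x - F p.2 x) 2 μ < ENNReal.ofReal ε :=
      h.eventually (gt_mem_nhds (by simpa using hε))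
    obtain ⟨N, hN⟩ := eventually_atTop.mp hev
    refine ⟨max N.1 N.2, fun m hm n hn => ?_⟩
    have hmn := hN (m, n) ⟨le_trans (le_max_left _ _) hm, le_trans (le_max_right _ _) hn⟩
    have hdist : dist ((hF m).toLp (F m)) ((hF n).toLp (F n))
        = (eLpNorm (fun x => F m x - F n x) 2 μ).toReal := by
      rw [dist_eq_norm, ← MemLp.toLp_sub, Lp.norm_toLp]
      rfl
    rw [hdist]
    exact ENNReal.toReal_lt_of_lt_ofReal hmn
  obtain ⟨G, hG⟩ := cauchySeq_tendsto_of_complete hc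
  refine ⟨⇑G, Lp.memLp G, ?_⟩
  have h2 : Tendsto (fun n => (hF n).toLp (F n)) atTop (𝓝 ((Lp.memLp G).toLp ⇑G)) := by
    rwa [Lp.toLp_coeFn]
  exact (Lp.tendsto_Lp_iff_tendsto_eLpNorm'' (fun n => F n) hF ⇑G (Lp.memLp G)).mp h2

private lemma integral_mul_tendsto {α : Type*} {m : MeasurableSpace α} {μ : Measure α}
    {F : ℕ → α → ℂ} {G ψ : α → ℂ} (hF : ∀ n, MemLp (F n) 2 μ) (hG : MemLp G 2 μ)
    (hψ : MemLp ψ 2 μ)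
    (h : Tendsto (fun n => eLpNorm (fun x => F n x - G x) 2 μ) atTop (𝓝 0)) :
    Tendsto (fun n => ∫ x, F n x * ψ x ∂μ) atTop (𝓝 (∫ x, G x * ψ x ∂μ)) := by
  have hψc : MemLp (fun x => (starRingEnd ℂ) (ψ x)) 2 μ := by
    refine ⟨RCLike.continuous_conj.comp_aestronglyMeasurable hψ.1, ?_⟩
    rw [eLpNorm_congr_norm_ae (g := ψ) (Eventually.of_forall fun x => RCLike.norm_conj _)]
    exact hψ.2
  set Ψ : Lp ℂ 2 μ := hψc.toLp _ with hΨ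
  have key : ∀ (f : α → ℂ) (hf : MemLp f 2 μ),
      (inner ℂ Ψ (hf.toLp f) : ℂ) = ∫ x, f x * ψ x ∂μ := by
    intro f hf
    rw [MeasureTheory.L2.inner_def]
    refine integral_congr_ae ?_
    filter_upwards [hψc.coeFn_toLp, hf.coeFn_toLp] with x h1 h2
    rw [← hΨ] at h1
    simp only [RCLike.inner_apply, h1, h2, RingHomCompTriple.comp_apply, RCLike.conj_conj]
    simp [mul_comm]
  have hTend : Tendsto (fun n => (hF n).toLp (F n)) atTop (𝓝 (hG.toLp G)) :=
    (Lp.tendsto_Lp_iff_tendsto_eLpNorm'' (fun n => F n) hF G hG).mpr h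
  have hinner : Tendsto (fun n => (inner ℂ Ψ ((hF n).toLp (F n)) : ℂ)) atTop
      (𝓝 (inner ℂ Ψ (hG.toLp G))) :=
    Filter.Tendsto.inner tendsto_const_nhds hTend
  rw [← key G hG]
  exact hinner.congr fun n => key (F n) (hF n)

private lemma dunklWeight_continuous {d : ℕ} {R Rp : Finset (EuclideanSpace ℝ (Fin d))}
    {k : EuclideanSpace ℝ (Fin d) → ℝ} (hroot : IsRootSystemData R Rp k) :
    Continuous (dunklWeight Rp k) := by
  unfold dunklWeight
  refine continuous_finset_prod _ (fun α hα => ?_)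
  have hαR : α ∈ R := (hroot.2.2.2.2.2.2.1 α).mpr (Or.inl hα)
  have hk : 0 ≤ 2 * k α := by
    have := hroot.2.2.2.2.1 α hαR; linarith
  exact (Real.continuous_rpow_const hk).comp
    (continuous_abs.comp (continuous_const.inner continuous_id))

private lemma dunklMeasure_compact_lt_top {d : ℕ} {R Rp : Finset (EuclideanSpace ℝ (Fin d))}
    {k : EuclideanSpace ℝ (Fin d) → ℝ} (hroot : IsRootSystemData R Rp k)
    {K : Set (EuclideanSpace ℝ (Fin d))} (hK : IsCompact K) :
    dunklMeasure Rp k K < ⊤ := by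
  obtain ⟨C, hC⟩ := hK.exists_bound_of_continuousOn (dunklWeight_continuous hroot).continuousOn
  have hae : ∀ᵐ x ∂(volume.restrict K),
      ENNReal.ofReal (dunklWeight Rp k x) ≤ ENNReal.ofReal C := by
    refine ae_restrict_of_forall_mem hK.measurableSet (fun x hx => ?_)
    exact ENNReal.ofReal_le_ofReal ((le_abs_self _).trans (hC x hx))
  calc dunklMeasure Rp k K = ∫⁻ x in K, ENNReal.ofReal (dunklWeight Rp k x) ∂volume :=
        withDensity_apply _ hK.measurableSet
    _ ≤ ∫⁻ _ in K, ENNReal.ofReal C ∂volume := lintegral_mono_ae hae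
    _ = ENNReal.ofReal C * volume K := by
        rw [setLIntegral_const]
    _ < ⊤ := ENNReal.mul_lt_top ENNReal.ofReal_lt_top hK.measure_lt_top

private lemma memL2_of_bound_support {d : ℕ} {R Rp : Finset (EuclideanSpace ℝ (Fin d))}
    {k : EuclideanSpace ℝ (Fin d) → ℝ} (hroot : IsRootSystemData R Rp k)
    {f : EuclideanSpace ℝ (Fin d) → ℂ}
    (hmeas : AEStronglyMeasurable f (dunklMeasure Rp k))
    {K : Set (EuclideanSpace ℝ (Fin d))} (hK : IsCompact K)
    (hsupp : ∀ x ∉ K, f x = 0) {C : ℝ} (hC : ∀ x, ‖f x‖ ≤ C) :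
    MemLp f 2 (dunklMeasure Rp k) := by
  refine ⟨hmeas, ?_⟩
  have hfi : f = K.indicator f := by
    funext x
    by_cases hx : x ∈ K
    · simp [hx]
    · simp [hx, hsupp x hx]
  rw [hfi, eLpNorm_indicator_eq_eLpNorm_restrict hK.measurableSet]
  calc eLpNorm f 2 ((dunklMeasure Rp k).restrict K)
      ≤ ((dunklMeasure Rp k).restrict K) Set.univ ^ (2:ℝ≥0∞).toReal⁻¹ * ENNReal.ofReal C :=
        eLpNorm_le_of_ae_bound (Eventually.of_forall hC)
    _ < ⊤ := by
        refine ENNReal.mul_lt_top ?_ ENNReal.ofReal_lt_top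
        rw [Measure.restrict_apply_univ]
        exact ENNReal.rpow_lt_top_of_nonneg (by norm_num)
          (dunklMeasure_compact_lt_top hroot hK).ne

private lemma inner_dunklReflect_self {d : ℕ} (α x : EuclideanSpace ℝ (Fin d)) (hα : α ≠ 0) :
    (inner ℝ α (dunklReflect α x) : ℝ) = - (inner ℝ α x : ℝ) := by
  have h : (inner ℝ α α : ℝ) ≠ 0 := fun h => hα (inner_self_eq_zero.mp h)
  unfold dunklReflect
  rw [inner_sub_right, real_inner_smul_right]
  rw [div_mul_cancel₀ _ h]
  ring

private lemma dunklReflect_involutive {d : ℕ} (α : EuclideanSpace ℝ (Fin d)) (hα : α ≠ 0)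
    (x : EuclideanSpace ℝ (Fin d)) : dunklReflect α (dunklReflect α x) = x := by
  have h := inner_dunklReflect_self α x hα
  conv_lhs => rw [dunklReflect, h]
  have hc : 2 * (-(inner ℝ α x : ℝ)) / (inner ℝ α α : ℝ)
      = -(2 * (inner ℝ α x : ℝ) / (inner ℝ α α : ℝ)) := by ring
  rw [hc, neg_smul, sub_neg_eq_add, dunklReflect, sub_add_cancel]

private lemma dunklReflect_continuous {d : ℕ} (α : EuclideanSpace ℝ (Fin d)) :
    Continuous (dunklReflect α) := by
  unfold dunklReflect
  exact continuous_id.sub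
    (((continuous_const.mul (continuous_const.inner (𝕜 := ℝ) continuous_id)).div_const _).smul
      continuous_const)

private lemma sub_dunklReflect {d : ℕ} (α x : EuclideanSpace ℝ (Fin d)) :
    x - dunklReflect α x = (2 * (inner ℝ α x : ℝ) / (inner ℝ α α : ℝ)) • α := by
  unfold dunklReflect
  abel

private lemma memL2_dunklOp {d : ℕ} {R Rp : Finset (EuclideanSpace ℝ (Fin d))}
    {k : EuclideanSpace ℝ (Fin d) → ℝ} (hroot : IsRootSystemData R Rp k)
    (ξ : EuclideanSpace ℝ (Fin d)) {ψ : EuclideanSpace ℝ (Fin d) → ℂ}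
    (hψ : ContDiff ℝ (⊤ : ℕ∞) ψ) (hψs : HasCompactSupport ψ) :
    MemLp (dunklOp Rp k ξ ψ) 2 (dunklMeasure Rp k) := by
  have hα0 : ∀ α ∈ Rp, α ≠ 0 := by
    intro α hα h0
    have : α ∈ R := (hroot.2.2.2.2.2.2.1 α).mpr (Or.inl hα)
    rw [h0] at this
    exact hroot.1 this
  have hdiff : Differentiable ℝ ψ := hψ.differentiable (by simp)
  have hfc : Continuous (fderiv ℝ ψ) := (hψ.fderiv_right (m := (⊤ : ℕ∞)) (by simp)).continuous
  have hf0cont : Continuous fun x => (fderiv ℝ ψ x) ξ := hfc.clm_apply continuous_const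
  obtain ⟨C0, hC0⟩ := hf0cont.bounded_above_of_compact_support (hψs.fderiv_apply ℝ ξ)
  obtain ⟨L, hL⟩ := hfc.bounded_above_of_compact_support (hψs.fderiv ℝ)
  have hL0 : 0 ≤ L := (norm_nonneg _).trans (hL 0)
  have hlip : LipschitzWith L.toNNReal ψ := by
    refine lipschitzWith_of_nnnorm_fderiv_le hdiff fun x => ?_
    rw [← NNReal.coe_le_coe, coe_nnnorm, Real.coe_toNNReal _ hL0]
    exact hL x
  have hlipest : ∀ x y, ‖ψ x - ψ y‖ ≤ L * ‖x - y‖ := by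
    intro x y
    have := hlip.dist_le_mul x y
    rwa [dist_eq_norm, dist_eq_norm, Real.coe_toNNReal _ hL0] at this
  -- the compact set containing the support
  set S : Set (EuclideanSpace ℝ (Fin d)) :=
    tsupport ψ ∪ ⋃ α ∈ (Rp : Finset (EuclideanSpace ℝ (Fin d))), dunklReflect α '' tsupport ψ
    with hS
  have hScomp : IsCompact S :=
    hψs.union (Rp.isCompact_biUnion fun α _ => hψs.image (dunklReflect_continuous α))
  have hsupp : ∀ x ∉ S, dunklOp Rp k ξ ψ x = 0 := by
    intro x hx
    have hx1 : x ∉ tsupport ψ := fun h => hx (Or.inl h)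
    have hfd : fderiv ℝ ψ x = 0 := by
      by_contra hne
      exact hx1 (support_fderiv_subset ℝ hne)
    unfold dunklOp
    rw [hfd]
    simp only [ContinuousLinearMap.zero_apply, zero_add]
    refine Finset.sum_eq_zero fun α hα => ?_
    have h1 : ψ x = 0 := image_eq_zero_of_notMem_tsupport hx1
    have h2 : ψ (dunklReflect α x) = 0 := by
      refine image_eq_zero_of_notMem_tsupport fun hmem => hx (Or.inr ?_)
      exact Set.mem_biUnion hα
        ⟨dunklReflect α x, hmem, dunklReflect_involutive α (hα0 α hα) x⟩
    simp [h1, h2]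
  -- the pointwise bound
  set B : EuclideanSpace ℝ (Fin d) → ℝ := fun α =>
    ‖((k α * (inner ℝ α ξ : ℝ) : ℝ) : ℂ)‖ * (L * (2 * ‖α‖ / (inner ℝ α α : ℝ))) with hB
  have hbound : ∀ x, ‖dunklOp Rp k ξ ψ x‖ ≤ C0 + ∑ α ∈ Rp, B α := by
    intro x
    unfold dunklOp
    refine (norm_add_le _ _).trans (add_le_add (hC0 x) ?_)
    refine (norm_sum_le _ _).trans (Finset.sum_le_sum fun α hα => ?_)
    have hαα : (0:ℝ) < (inner ℝ α α : ℝ) := by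
      rw [real_inner_self_eq_norm_sq]
      exact pow_pos (norm_pos_iff.mpr (hα0 α hα)) 2
    by_cases ht : (inner ℝ α x : ℝ) = 0
    · rw [ht]
      simp only [Complex.ofReal_zero, div_zero, norm_zero]
      exact mul_nonneg (norm_nonneg _)
        (mul_nonneg hL0 (div_nonneg (by positivity) hαα.le))
    · have ht' : (0:ℝ) < |(inner ℝ α x : ℝ)| := abs_pos.mpr ht
      rw [norm_div, norm_mul]
      have hden : ‖(((inner ℝ α x : ℝ) : ℝ) : ℂ)‖ = |(inner ℝ α x : ℝ)| := by
        rw [Complex.norm_real, Real.norm_eq_abs]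
      rw [hden, div_le_iff₀ ht']
      have hnum : ‖ψ x - ψ (dunklReflect α x)‖
          ≤ L * (2 * |(inner ℝ α x : ℝ)| / (inner ℝ α α : ℝ) * ‖α‖) := by
        calc ‖ψ x - ψ (dunklReflect α x)‖ ≤ L * ‖x - dunklReflect α x‖ := hlipest _ _
          _ = L * (|2 * (inner ℝ α x : ℝ) / (inner ℝ α α : ℝ)| * ‖α‖) := by
              rw [sub_dunklReflect, norm_smul, Real.norm_eq_abs]
          _ = L * (2 * |(inner ℝ α x : ℝ)| / (inner ℝ α α : ℝ) * ‖α‖) := by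
              rw [abs_div, abs_mul, abs_two, abs_of_pos hαα]
      calc ‖((k α * (inner ℝ α ξ : ℝ) : ℝ) : ℂ)‖ * ‖ψ x - ψ (dunklReflect α x)‖
          ≤ ‖((k α * (inner ℝ α ξ : ℝ) : ℝ) : ℂ)‖
              * (L * (2 * |(inner ℝ α x : ℝ)| / (inner ℝ α α : ℝ) * ‖α‖)) :=
            mul_le_mul_of_nonneg_left hnum (norm_nonneg _)
        _ = B α * |(inner ℝ α x : ℝ)| := by
            rw [hB]
            field_simp
  -- measurability
  have hmeas : Measurable (dunklOp Rp k ξ ψ) := by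
    unfold dunklOp
    refine (hf0cont.measurable).add (Finset.measurable_sum _ fun α _ => ?_)
    refine Measurable.div ?_ ?_
    · exact (continuous_const.mul
        ((hψ.continuous).sub (hψ.continuous.comp (dunklReflect_continuous α)))).measurable
    · exact (Complex.continuous_ofReal.comp (continuous_const.inner continuous_id)).measurable
  exact memL2_of_bound_support hroot hmeas.aestronglyMeasurable hScomp hsupp hbound

/-- The quadratic form `q_k` is closed. -/
theorem form_qk_is_closed
    (d : ℕ) (hd : 1 ≤ d) (R Rp : Finset (EuclideanSpace ℝ (Fin d)))
    (k : EuclideanSpace ℝ (Fin d) → ℝ) (hroot : IsRootSystemData R Rp k)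
    (V : EuclideanSpace ℝ (Fin d) → ℝ) (hV0 : ∀ x, 0 ≤ V x) (hVmeas : Measurable V)
    (hVloc : ∀ K : Set (EuclideanSpace ℝ (Fin d)), IsCompact K →
      IntegrableOn V K (dunklMeasure Rp k))
    -- a sequence `(φ_n)` in `D(q_k)`, with distributional Dunkl derivatives `g n j`:
    (φn : ℕ → EuclideanSpace ℝ (Fin d) → ℂ)
    (hφn : ∀ n, MemLp (φn n) 2 (dunklMeasure Rp k))
    (g : ℕ → Fin d → EuclideanSpace ℝ (Fin d) → ℂ)
    (hg : ∀ n j, MemLp (g n j) 2 (dunklMeasure Rp k))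
    (hdist : ∀ n, ∀ j : Fin d, ∀ ψ : EuclideanSpace ℝ (Fin d) → ℂ,
      ContDiff ℝ (⊤ : ℕ∞) ψ → HasCompactSupport ψ →
      ∫ x, g n j x * ψ x ∂(dunklMeasure Rp k)
        = -∫ x, φn n x * dunklOp Rp k (EuclideanSpace.single j 1) ψ x ∂(dunklMeasure Rp k))
    (hVφn : ∀ n, MemLp (fun x => (Real.sqrt (V x) : ℂ) * φn n x) 2 (dunklMeasure Rp k))
    -- `φ ∈ L²(μ_k)` with `‖φ_n - φ‖₂ → 0`:
    (φ : EuclideanSpace ℝ (Fin d) → ℂ) (hφ : MemLp φ 2 (dunklMeasure Rp k))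
    (hL2 : Tendsto (fun n => eLpNorm (fun x => φn n x - φ x) 2 (dunklMeasure Rp k))
      atTop (𝓝 0))
    -- `q_k(φ_n - φ_m) → 0` as `n, m → ∞`:
    (hCauchy : Tendsto (fun p : ℕ × ℕ =>
        (∑ j : Fin d, (eLpNorm (fun x => g p.1 j x - g p.2 j x) 2 (dunklMeasure Rp k)) ^ 2)
          + (eLpNorm (fun x => (Real.sqrt (V x) : ℂ) * (φn p.1 x - φn p.2 x))
              2 (dunklMeasure Rp k)) ^ 2) atTop (𝓝 0)) :
    -- then `φ ∈ D(q_k)` and `q_k(φ_n - φ) → 0`: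
    ∃ gl : Fin d → EuclideanSpace ℝ (Fin d) → ℂ,
      (∀ j, MemLp (gl j) 2 (dunklMeasure Rp k)) ∧
      (∀ j : Fin d, ∀ ψ : EuclideanSpace ℝ (Fin d) → ℂ,
        ContDiff ℝ (⊤ : ℕ∞) ψ → HasCompactSupport ψ →
        ∫ x, gl j x * ψ x ∂(dunklMeasure Rp k)
          = -∫ x, φ x * dunklOp Rp k (EuclideanSpace.single j 1) ψ x ∂(dunklMeasure Rp k)) ∧
      MemLp (fun x => (Real.sqrt (V x) : ℂ) * φ x) 2 (dunklMeasure Rp k) ∧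
      Tendsto (fun n =>
          (∑ j : Fin d, (eLpNorm (fun x => g n j x - gl j x) 2 (dunklMeasure Rp k)) ^ 2)
            + (eLpNorm (fun x => (Real.sqrt (V x) : ℂ) * (φn n x - φ x))
                2 (dunklMeasure Rp k)) ^ 2) atTop (𝓝 0) := by

  set μ := dunklMeasure Rp k with hμdef
  -- limits of the Dunkl derivatives
  have hgconv : ∀ j : Fin d, ∃ G, MemLp G 2 μ ∧
      Tendsto (fun n => eLpNorm (fun x => g n j x - G x) 2 μ) atTop (𝓝 0) := by
    intro j
    refine lp_limit_of_cauchy (fun n => hg n j) ?_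
    refine tendsto_zero_of_sq_le hCauchy fun p => ?_
    calc (eLpNorm (fun x => g p.1 j x - g p.2 j x) 2 μ) ^ 2
        ≤ ∑ j' : Fin d, (eLpNorm (fun x => g p.1 j' x - g p.2 j' x) 2 μ) ^ 2 :=
          Finset.single_le_sum (f := fun j' : Fin d =>
            (eLpNorm (fun x => g p.1 j' x - g p.2 j' x) 2 μ) ^ 2)
            (fun _ _ => zero_le) (Finset.mem_univ j)
      _ ≤ _ := le_self_add
  choose gl hglmem hglconv using hgconv
  -- limit of the sequence √V · φₙ
  have hfun_cauchy : Tendsto (fun p : ℕ × ℕ =>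
      eLpNorm (fun x => (Real.sqrt (V x) : ℂ) * φn p.1 x - (Real.sqrt (V x) : ℂ) * φn p.2 x)
        2 μ) atTop (𝓝 0) := by
    refine tendsto_zero_of_sq_le hCauchy fun p => ?_
    have heq : (fun x => (Real.sqrt (V x) : ℂ) * φn p.1 x - (Real.sqrt (V x) : ℂ) * φn p.2 x)
        = fun x => (Real.sqrt (V x) : ℂ) * (φn p.1 x - φn p.2 x) := by
      funext x; ring
    rw [heq]
    exact le_add_self
  obtain ⟨h, hhmem, hhconv⟩ :=
    lp_limit_of_cauchy (F := fun n => fun x => (Real.sqrt (V x) : ℂ) * φn n x) hVφn hfun_cauchy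
  -- a.e. identification of the limit
  have hL2' : Tendsto (fun n => eLpNorm ((fun n => φn n) n - φ) 2 μ) atTop (𝓝 0) := hL2
  have hIM1 : TendstoInMeasure μ (fun n => φn n) atTop φ :=
    tendstoInMeasure_of_tendsto_eLpNorm (p := 2) (by norm_num)
      (fun n => (hφn n).1) hφ.1 hL2'
  obtain ⟨ns, hns, hae1⟩ := hIM1.exists_seq_tendsto_ae
  have hhconv_sub : Tendsto (fun i =>
      eLpNorm ((fun i => fun x => (Real.sqrt (V x) : ℂ) * φn (ns i) x) i - h) 2 μ)
      atTop (𝓝 0) := by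
    have := hhconv.comp hns.tendsto_atTop
    exact this.congr fun i => rfl
  have hIM2 : TendstoInMeasure μ (fun i => fun x => (Real.sqrt (V x) : ℂ) * φn (ns i) x)
      atTop h :=
    tendstoInMeasure_of_tendsto_eLpNorm (p := 2) (by norm_num)
      (fun i => (hVφn (ns i)).1) hhmem.1 hhconv_sub
  obtain ⟨ms, hms, hae2⟩ := hIM2.exists_seq_tendsto_ae
  have hae : h =ᵐ[μ] fun x => (Real.sqrt (V x) : ℂ) * φ x := by
    filter_upwards [hae1, hae2] with x h1 h2
    have h3 : Tendsto (fun i => (Real.sqrt (V x) : ℂ) * φn (ns (ms i)) x) atTop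
        (𝓝 ((Real.sqrt (V x) : ℂ) * φ x)) :=
      tendsto_const_nhds.mul (h1.comp hms.tendsto_atTop)
    exact tendsto_nhds_unique h2 h3
  have hVφ : MemLp (fun x => (Real.sqrt (V x) : ℂ) * φ x) 2 μ := hhmem.ae_eq hae
  have hVconv : Tendsto (fun n =>
      eLpNorm (fun x => (Real.sqrt (V x) : ℂ) * (φn n x - φ x)) 2 μ) atTop (𝓝 0) := by
    refine hhconv.congr fun n => ?_
    refine eLpNorm_congr_ae ?_
    filter_upwards [hae] with x hx
    rw [hx]
    ring
  refine ⟨gl, hglmem, ?_, hVφ, ?_⟩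
  · -- the distributional identity for the limit
    intro j ψ hc hs
    have hψL2 : MemLp ψ 2 μ := by
      obtain ⟨C, hC⟩ := hc.continuous.bounded_above_of_compact_support hs
      exact memL2_of_bound_support hroot hc.continuous.measurable.aestronglyMeasurable hs
        (fun x hx => image_eq_zero_of_notMem_tsupport hx) hC
    have hTψ : MemLp (dunklOp Rp k (EuclideanSpace.single j 1) ψ) 2 μ :=
      memL2_dunklOp hroot _ hc hs
    have hA : Tendsto (fun n => ∫ x, g n j x * ψ x ∂μ) atTop
        (𝓝 (∫ x, gl j x * ψ x ∂μ)) :=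
      integral_mul_tendsto (fun n => hg n j) (hglmem j) hψL2 (hglconv j)
    have hB : Tendsto (fun n =>
        ∫ x, φn n x * dunklOp Rp k (EuclideanSpace.single j 1) ψ x ∂μ) atTop
        (𝓝 (∫ x, φ x * dunklOp Rp k (EuclideanSpace.single j 1) ψ x ∂μ)) :=
      integral_mul_tendsto hφn hφ hTψ hL2
    have hA' : Tendsto (fun n => ∫ x, g n j x * ψ x ∂μ) atTop
        (𝓝 (-∫ x, φ x * dunklOp Rp k (EuclideanSpace.single j 1) ψ x ∂μ)) :=
      (hB.neg).congr fun n => (hdist n j ψ hc hs).symm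
    exact tendsto_nhds_unique hA hA'
  · -- convergence of the form
    have hsum : Tendsto (fun n =>
        ∑ j : Fin d, (eLpNorm (fun x => g n j x - gl j x) 2 μ) ^ 2) atTop (𝓝 0) := by
      have := tendsto_finset_sum (Finset.univ : Finset (Fin d))
        (fun j _ => sq_tendsto_zero (hglconv j))
      simpa using this
    simpa using hsum.add (sq_tendsto_zero hVconv)
end
end

section
/- For every ω ∈ [0, π/2) there exist constants c > 0 and C > 0 such that for all z ∈ ℂ with Re z > 0 and 0 ≤ arg z ≤ ω one has c · coth(Re z) ≤ Re(coth z) ≤ C · coth(Re z), where coth z = cosh z / sinh z; moreover the upper bound holds with C = 1 for every z with Re z > 0. -/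
/-!
For `z = x + iy`, `Re (coth z) = sinh x cosh x / (sinh² x + sin² y)`. Dropping `sin² y` from the
denominator gives the upper bound `coth x`. In the sector `|arg z| ≤ ω < π/2` one has
`|sin y| ≤ |y| ≤ x tan ω ≤ sinh x tan ω`, so the denominator is at most `(1 + tan² ω) sinh² x`,
which gives the lower bound with `c = (1 + tan² ω)⁻¹ = cos² ω`.
-/

open Real

namespace Complex

lemma sinh_re (z : ℂ) : (sinh z).re = Real.sinh z.re * Real.cos z.im := by
  obtain ⟨x, y, rfl⟩ : ∃ x y : ℝ, z = x + y * I := ⟨z.re, z.im, (re_add_im z).symm⟩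
  simp [sinh_add, sinh_mul_I, cosh_mul_I, ← ofReal_sinh, ← ofReal_cosh, ← ofReal_sin,
    ← ofReal_cos]

lemma sinh_im (z : ℂ) : (sinh z).im = Real.cosh z.re * Real.sin z.im := by
  obtain ⟨x, y, rfl⟩ : ∃ x y : ℝ, z = x + y * I := ⟨z.re, z.im, (re_add_im z).symm⟩
  simp [sinh_add, sinh_mul_I, cosh_mul_I, ← ofReal_sinh, ← ofReal_cosh, ← ofReal_sin,
    ← ofReal_cos]

lemma cosh_re (z : ℂ) : (cosh z).re = Real.cosh z.re * Real.cos z.im := by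
  obtain ⟨x, y, rfl⟩ : ∃ x y : ℝ, z = x + y * I := ⟨z.re, z.im, (re_add_im z).symm⟩
  simp [cosh_add, sinh_mul_I, cosh_mul_I, ← ofReal_sinh, ← ofReal_cosh, ← ofReal_sin,
    ← ofReal_cos]

lemma cosh_im (z : ℂ) : (cosh z).im = Real.sinh z.re * Real.sin z.im := by
  obtain ⟨x, y, rfl⟩ : ∃ x y : ℝ, z = x + y * I := ⟨z.re, z.im, (re_add_im z).symm⟩
  simp [cosh_add, sinh_mul_I, cosh_mul_I, ← ofReal_sinh, ← ofReal_cosh, ← ofReal_sin,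
    ← ofReal_cos]

lemma normSq_sinh (z : ℂ) : normSq (sinh z) = Real.sinh z.re ^ 2 + Real.sin z.im ^ 2 := by
  rw [normSq_apply, sinh_re, sinh_im]
  linear_combination (Real.sinh z.re ^ 2 * Real.cos_sq_add_sin_sq z.im
    + Real.sin z.im ^ 2 * Real.cosh_sq z.re)

lemma re_cosh_div_sinh (z : ℂ) :
    (cosh z / sinh z).re =
      Real.sinh z.re * Real.cosh z.re / (Real.sinh z.re ^ 2 + Real.sin z.im ^ 2) := by
  rw [div_re, normSq_sinh, ← add_div, sinh_re, sinh_im, cosh_re, cosh_im]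
  congr 1
  linear_combination Real.sinh z.re * Real.cosh z.re * Real.cos_sq_add_sin_sq z.im

lemma re_cosh_div_sinh_le {z : ℂ} (hx : 0 < z.re) :
    (cosh z / sinh z).re ≤ Real.cosh z.re / Real.sinh z.re := by
  have hs : 0 < Real.sinh z.re := Real.sinh_pos_iff.2 hx
  calc (cosh z / sinh z).re
      = Real.sinh z.re * Real.cosh z.re / (Real.sinh z.re ^ 2 + Real.sin z.im ^ 2) :=
        re_cosh_div_sinh z
    _ ≤ Real.sinh z.re * Real.cosh z.re / Real.sinh z.re ^ 2 :=
        div_le_div_of_nonneg_left (by positivity) (by positivity)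
          (le_add_of_nonneg_right (sq_nonneg _))
    _ = Real.cosh z.re / Real.sinh z.re := by field_simp

lemma inv_one_add_sq_mul_le_re_cosh_div_sinh {z : ℂ} {t : ℝ} (hx : 0 < z.re)
    (him : |z.im| ≤ t * z.re) :
    (1 + t ^ 2)⁻¹ * (Real.cosh z.re / Real.sinh z.re) ≤ (cosh z / sinh z).re := by
  have hs : 0 < Real.sinh z.re := Real.sinh_pos_iff.2 hx
  have ht : 0 ≤ t := nonneg_of_mul_nonneg_left ((abs_nonneg _).trans him) hx
  have hsin : Real.sin z.im ^ 2 ≤ t ^ 2 * Real.sinh z.re ^ 2 :=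
    calc Real.sin z.im ^ 2 ≤ |z.im| ^ 2 := by rw [sq_abs]; exact Real.sin_sq_le_sq
      _ ≤ (t * Real.sinh z.re) ^ 2 := by
        gcongr
        exact him.trans (mul_le_mul_of_nonneg_left (Real.self_le_sinh_iff.2 hx.le) ht)
      _ = t ^ 2 * Real.sinh z.re ^ 2 := mul_pow _ _ _
  rw [re_cosh_div_sinh]
  calc (1 + t ^ 2)⁻¹ * (Real.cosh z.re / Real.sinh z.re)
      = Real.sinh z.re * Real.cosh z.re / ((1 + t ^ 2) * Real.sinh z.re ^ 2) := by
        field_simp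
    _ ≤ Real.sinh z.re * Real.cosh z.re / (Real.sinh z.re ^ 2 + Real.sin z.im ^ 2) :=
        div_le_div_of_nonneg_left (by positivity) (by positivity) (by linarith)

lemma abs_im_le_tan_mul_re {z : ℂ} {ω : ℝ} (hx : 0 < z.re) (hω : ω < π / 2)
    (harg : |z.arg| ≤ ω) : |z.im| ≤ Real.tan ω * z.re := by
  have him : z.im = Real.tan z.arg * z.re := by
    rw [tan_arg, div_mul_cancel₀ _ hx.ne']
  obtain ⟨hlo, hhi⟩ := abs_le.1 harg
  have hω₀ : 0 ≤ ω := (abs_nonneg _).trans harg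
  have htan : |Real.tan z.arg| ≤ Real.tan ω := by
    have mono := Real.strictMonoOn_tan.monotoneOn
    refine abs_le.2 ⟨?_, ?_⟩
    · rw [← Real.tan_neg]
      exact mono ⟨by linarith, by linarith⟩ ⟨by linarith, by linarith⟩ hlo
    · exact mono ⟨by linarith, by linarith⟩ ⟨by linarith, by linarith⟩ hhi
  rw [him, abs_mul, abs_of_pos hx]
  exact mul_le_mul_of_nonneg_right htan hx.le

end Complex

/-- For every `ω ∈ [0, π/2)` there are constants `c, C > 0` such that
`c·coth(Re z) ≤ Re(coth z) ≤ C·coth(Re z)` whenever `Re z > 0` and `0 ≤ arg z ≤ ω`;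
moreover the upper bound holds with `C = 1` for every `z` with `Re z > 0`. -/
theorem re_coth_comparable_coth_re :
    (∀ ω : ℝ, 0 ≤ ω → ω < π / 2 →
      ∃ c C : ℝ, 0 < c ∧ 0 < C ∧
        ∀ z : ℂ, 0 < z.re → 0 ≤ z.arg → z.arg ≤ ω →
          c * (Real.cosh z.re / Real.sinh z.re) ≤ (Complex.cosh z / Complex.sinh z).re ∧
          (Complex.cosh z / Complex.sinh z).re ≤ C * (Real.cosh z.re / Real.sinh z.re)) ∧
    (∀ z : ℂ, 0 < z.re →
      (Complex.cosh z / Complex.sinh z).re ≤ 1 * (Real.cosh z.re / Real.sinh z.re)) := by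
  have upper : ∀ z : ℂ, 0 < z.re →
      (Complex.cosh z / Complex.sinh z).re ≤ 1 * (Real.cosh z.re / Real.sinh z.re) :=
    fun z hx => by rw [one_mul]; exact Complex.re_cosh_div_sinh_le hx
  refine ⟨fun ω _ hω => ⟨(1 + Real.tan ω ^ 2)⁻¹, 1, by positivity, one_pos, ?_⟩, upper⟩
  intro z hx harg₀ harg
  have hmod : |z.arg| ≤ ω := abs_le.2 ⟨by linarith, harg⟩
  exact ⟨Complex.inv_one_add_sq_mul_le_re_cosh_div_sinh hx
    (Complex.abs_im_le_tan_mul_re hx hω hmod), upper z hx⟩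
end
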